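/- Let q ≥ 1, let μ₁, μ₂ ∈ ℝ^q, and let Σ₁ = diag(S²_{1,1}, …, S²_{1,q}) and Σ₂ = diag(S²_{2,1}, …, S²_{2,q}) be diagonal covariance matrices with 0 < S²_{1,z} < S²_{2,z} for every z ∈ {1,…,q}. Then for every x ∈ ℝ^q, Φ(x | μ₁, Σ₁) / Φ(x | μ₂, Σ₂) ≤ (∏_{z=1}^q S_{2,z}/S_{1,z}) · exp( (1/2) Σ_{z=1}^q (μ_{1,z} − μ_{2,z})² / (S²_{2,z} − S²_{1,z}) ). -/

import Mathlib

open Real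

/-- Gaussian density on `ℝ^q` with mean `μ` and diagonal covariance matrix whose
diagonal entries (variances) are given by `v`. -/
noncomputable def gaussDensity {q : ℕ} (μ v : Fin q → ℝ) (x : Fin q → ℝ) : ℝ :=
  (2 * Real.pi) ^ (-(q : ℝ) / 2) * (∏ z, v z) ^ (-(1 : ℝ) / 2) *
    Real.exp (-(1 / 2) * ∑ z, (x z - μ z) ^ 2 / v z)

/-! The ratio of the two densities is `∏ √(v₂ z)/√(v₁ z)` times the exponential of half the sum
over `z` of `(x z - μ₂ z)²/v₂ z - (x z - μ₁ z)²/v₁ z`. Maximising each summand over `x z` is a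
one-variable quadratic problem whose maximum is `(μ₁ z - μ₂ z)²/(v₂ z - v₁ z)`. -/

lemma sq_add_div_sub_sq_div_le {𝕜 : Type*} [Field 𝕜] [LinearOrder 𝕜] [IsStrictOrderedRing 𝕜]
    {a b : 𝕜} (s d : 𝕜) (ha : 0 < a) (hab : a < b) :
    (s + d) ^ 2 / b - s ^ 2 / a ≤ d ^ 2 / (b - a) := by
  have hb : 0 < b := ha.trans hab
  have hba : 0 < b - a := sub_pos.2 hab
  rw [div_sub_div _ _ hb.ne' ha.ne', div_le_div_iff₀ (by positivity) hba]
  nlinarith [sq_nonneg ((b - a) * s - a * d)]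

lemma prod_rpow_neg_half {ι : Type*} [Fintype ι] {v : ι → ℝ} (hv : ∀ z, 0 ≤ v z) :
    (∏ z, v z) ^ (-(1 : ℝ) / 2) = (∏ z, √(v z))⁻¹ := by
  rw [← Real.finsetProd_rpow _ _ fun z _ => hv z, ← Finset.prod_inv_distrib]
  refine Finset.prod_congr rfl fun z _ => ?_
  rw [neg_div, Real.rpow_neg (hv z), Real.sqrt_eq_rpow]

lemma gaussDensity_div_gaussDensity {q : ℕ} (μ₁ μ₂ v₁ v₂ x : Fin q → ℝ)
    (h₁ : ∀ z, 0 < v₁ z) (h₂ : ∀ z, 0 < v₂ z) :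
    gaussDensity μ₁ v₁ x / gaussDensity μ₂ v₂ x =
      (∏ z, √(v₂ z) / √(v₁ z)) *
        Real.exp ((1 / 2) * ∑ z, ((x z - μ₂ z) ^ 2 / v₂ z - (x z - μ₁ z) ^ 2 / v₁ z)) := by
  unfold gaussDensity
  set A := ∑ z, (x z - μ₁ z) ^ 2 / v₁ z
  set B := ∑ z, (x z - μ₂ z) ^ 2 / v₂ z
  have hexp : (1 / 2) * (B - A) = -(1 / 2) * A - -(1 / 2) * B := by ring
  rw [prod_rpow_neg_half fun z => (h₁ z).le, prod_rpow_neg_half fun z => (h₂ z).le,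
    Finset.prod_div_distrib, Finset.sum_sub_distrib, hexp, Real.exp_sub]
  field_simp

theorem stmt_5_general (q : ℕ) (μ₁ μ₂ v₁ v₂ : Fin q → ℝ)
    (h₁ : ∀ z, 0 < v₁ z) (h₁₂ : ∀ z, v₁ z < v₂ z) (x : Fin q → ℝ) :
    gaussDensity μ₁ v₁ x / gaussDensity μ₂ v₂ x ≤
      (∏ z, Real.sqrt (v₂ z) / Real.sqrt (v₁ z)) *
        Real.exp ((1 / 2) * ∑ z, (μ₁ z - μ₂ z) ^ 2 / (v₂ z - v₁ z)) := by
  rw [gaussDensity_div_gaussDensity μ₁ μ₂ v₁ v₂ x h₁ fun z => (h₁ z).trans (h₁₂ z)]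
  gcongr with z
  have := sq_add_div_sub_sq_div_le (x z - μ₁ z) (μ₁ z - μ₂ z) (h₁ z) (h₁₂ z)
  rwa [sub_add_sub_cancel] at this

/-- Ratio bound for two Gaussian densities with diagonal covariances
`Σ₁ = diag(v₁)`, `Σ₂ = diag(v₂)` with `0 < v₁ z < v₂ z` for all `z`:
`Φ(x|μ₁,Σ₁)/Φ(x|μ₂,Σ₂) ≤ (∏ √(v₂ z)/√(v₁ z)) · exp(½ Σ (μ₁ z − μ₂ z)²/(v₂ z − v₁ z))`. -/
theorem stmt_5 (q : ℕ) (hq : 1 ≤ q) (μ₁ μ₂ v₁ v₂ : Fin q → ℝ)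
    (h₁ : ∀ z, 0 < v₁ z) (h₁₂ : ∀ z, v₁ z < v₂ z) (x : Fin q → ℝ) :
    gaussDensity μ₁ v₁ x / gaussDensity μ₂ v₂ x ≤
      (∏ z, Real.sqrt (v₂ z) / Real.sqrt (v₁ z)) *
        Real.exp ((1 / 2) * ∑ z, (μ₁ z - μ₂ z) ^ 2 / (v₂ z - v₁ z)) :=
  stmt_5_general q μ₁ μ₂ v₁ v₂ h₁ h₁₂ x
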